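/- arXiv:2505.04820 — 5 statements merged into one kernel-verified Lean document; each statement's English description precedes it below -/
import Mathlib

section
/- Let h : ℂ^N → ℝ be convex and differentiable, let W ∈ ℂ^{N×N} be Hermitian positive definite, let C ⊆ ℂ^N be a nonempty closed convex set, let α > 0, let g ∈ ℂ^N, and let x ∈ C. If x̄⁺ ∈ C is a minimizer over C of the function x̄ ↦ S_h(x̄, x, g, W, α), then Re⟨g, x − x̄⁺⟩ ≥ (1/α)‖x̄⁺ − x‖_W² + h(x̄⁺) − h(x). -/
open scoped ComplexOrder

noncomputable section

/-- `ℂ^N` with the standard complex inner product (conjugate-linear in the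
first argument) and the induced norm. -/
abbrev EC (N : ℕ) := EuclideanSpace ℂ (Fin N)

/-- Weighted squared norm `‖z‖_W² = zᴴ W z` (its real part, which is the full
value when `W` is Hermitian). -/
def wnorm2 {N : ℕ} (W : Matrix (Fin N) (Fin N) ℂ) (z : EC N) : ℝ :=
  (dotProduct (fun i => starRingEnd ℂ (z i)) (W.mulVec (fun i => z i))).re

/-- Surrogate `S_h(x̄, x, g, W, α) = Re⟨g, x̄ − x⟩ + (1/(2α))‖x̄ − x‖_W² + h(x̄) − h(x)`. -/
def Sh {N : ℕ} (h : EC N → ℝ) (W : Matrix (Fin N) (Fin N) ℂ) (α : ℝ)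
    (g x xb : EC N) : ℝ :=
  (inner ℂ g (xb - x) : ℂ).re + (1 / (2 * α)) * wnorm2 W (xb - x) + h xb - h x

/-- `D_h^C(x, g, W, α) = −(2/α)·inf_{x̄ ∈ C} S_h(x̄, x, g, W, α)`. -/
def Dh {N : ℕ} (h : EC N → ℝ) (C : Set (EC N)) (W : Matrix (Fin N) (Fin N) ℂ)
    (α : ℝ) (g x : EC N) : ℝ :=
  -(2 / α) * sInf ((fun xb => Sh h W α g x xb) '' C)

/-- The real-linear continuous functional `d ↦ Re⟨g, d⟩`, used to say that a
real-differentiable `f : ℂ^N → ℝ` has gradient `g` at a point. -/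
def gradDual {N : ℕ} (g : EC N) : EC N →L[ℝ] ℝ :=
  Complex.reCLM.comp ((innerSL ℂ g).restrictScalars ℝ)

/-- The rank-one matrix `u·uᴴ` with entries `uᵢ · conj(uⱼ)`. -/
def rankOne {N : ℕ} (u : EC N) : Matrix (Fin N) (Fin N) ℂ :=
  Matrix.vecMulVec (fun i => u i) (fun i => starRingEnd ℂ (u i))

end

/-!
Move from the minimizer `x̄⁺` towards `x` along the segment `x_t = (1 - t) x̄⁺ + t x ⊆ C`.
Since `x_t - x = (1 - t)(x̄⁺ - x)`, the linear part of the surrogate scales by `1 - t`, the quadratic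
part by `(1 - t)²`, and convexity bounds `h(x_t)`; minimality of `x̄⁺` then leaves, after dividing
by `t`, the claimed inequality up to an error `O(t)`, which disappears as `t → 0⁺`.
-/

open Filter Topology

lemma wnorm2_smul {N : ℕ} (W : Matrix (Fin N) (Fin N) ℂ) (r : ℝ) (z : EC N) :
    wnorm2 W (r • z) = r ^ 2 * wnorm2 W z := by
  have hz : (fun i => (r • z) i) = (r : ℂ) • fun i => z i := by
    funext i; simp [Complex.real_smul]
  have hzs : (fun i => starRingEnd ℂ ((r • z) i)) = (r : ℂ) • fun i => starRingEnd ℂ (z i) := by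
    funext i; simp [Complex.real_smul]
  rw [wnorm2, wnorm2, hz, hzs, Matrix.mulVec_smul, dotProduct_smul, smul_dotProduct,
    smul_smul, smul_eq_mul, ← Complex.ofReal_mul, Complex.re_ofReal_mul, sq]

lemma nonpos_of_forall_Ioc_le_mul {a b : ℝ} (h : ∀ t ∈ Set.Ioc (0 : ℝ) 1, a ≤ t * b) : a ≤ 0 := by
  have hlim : Tendsto (fun t : ℝ => t * b) (𝓝[>] 0) (𝓝 0) :=
    ((continuous_mul_const b).tendsto' 0 0 (zero_mul b)).mono_left nhdsWithin_le_nhds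
  exact ge_of_tendsto hlim (eventually_of_mem (Ioc_mem_nhdsGT zero_lt_one) h)

theorem IsMinOn.two_mul_quadratic_add_sub_le {E : Type*} [AddCommGroup E] [Module ℝ E]
    {C : Set E} (hC : Convex ℝ C) {h : E → ℝ} (hh : ConvexOn ℝ C h) (ℓ : E →ₗ[ℝ] ℝ)
    {q : E → ℝ} (hq : ∀ (r : ℝ) z, q (r • z) = r ^ 2 * q z) (c : ℝ) {x xp : E}
    (hx : x ∈ C) (hxp : xp ∈ C)
    (hmin : IsMinOn (fun y => ℓ (y - x) + c * q (y - x) + h y - h x) C xp) :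
    2 * c * q (xp - x) + h xp - h x ≤ ℓ (x - xp) := by
  rw [← neg_sub xp x, map_neg, ← sub_nonpos]
  refine nonpos_of_forall_Ioc_le_mul (b := c * q (xp - x)) fun t ⟨ht0, ht1⟩ => ?_
  have hseg : (1 - t) • xp + t • x - x = (1 - t) • (xp - x) := by module
  have hmin_t := isMinOn_iff.mp hmin _ (hC hxp hx (sub_nonneg.2 ht1) ht0.le (sub_add_cancel 1 t))
  have hconv := hh.2 hxp hx (sub_nonneg.2 ht1) ht0.le (sub_add_cancel 1 t)
  simp only [hseg, map_smul, smul_eq_mul, hq] at hmin_t hconv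
  have : t * (2 * c * q (xp - x) + h xp - h x - -ℓ (xp - x) - t * (c * q (xp - x))) ≤ 0 := by
    linarith
  exact sub_nonpos.1 (nonpos_of_mul_nonpos_right this ht0)

theorem stmt1_general {N : ℕ} (h : EC N → ℝ) (hconv : ConvexOn ℝ Set.univ h)
    (W : Matrix (Fin N) (Fin N) ℂ)
    (C : Set (EC N)) (hCcv : Convex ℝ C)
    (α : ℝ) (g : EC N) (x : EC N) (hx : x ∈ C)
    (xp : EC N) (hxp : xp ∈ C)
    (hmin : IsMinOn (fun xb => Sh h W α g x xb) C xp) :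
    (inner ℂ g (x - xp) : ℂ).re ≥ (1 / α) * wnorm2 W (xp - x) + h xp - h x := by
  have key := hmin.two_mul_quadratic_add_sub_le hCcv (hconv.subset (Set.subset_univ C) hCcv)
    (gradDual g).toLinearMap (wnorm2_smul W) (1 / (2 * α)) hx hxp
  rw [show 2 * (1 / (2 * α)) = 1 / α by ring] at key
  exact key

/-- First-order optimality inequality for the surrogate.
If `x̄⁺ ∈ C` minimizes `x̄ ↦ S_h(x̄, x, g, W, α)` over the nonempty closed
convex set `C`, with `h` convex differentiable, `W` Hermitian positive
definite, `α > 0`, `x ∈ C`, then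
`Re⟨g, x − x̄⁺⟩ ≥ (1/α)‖x̄⁺ − x‖_W² + h(x̄⁺) − h(x)`. -/
theorem stmt1 {N : ℕ} (h : EC N → ℝ) (hconv : ConvexOn ℝ Set.univ h)
    (hdiff : Differentiable ℝ h)
    (W : Matrix (Fin N) (Fin N) ℂ) (hW : W.PosDef)
    (C : Set (EC N)) (hCne : C.Nonempty) (hCcl : IsClosed C) (hCcv : Convex ℝ C)
    (α : ℝ) (hα : 0 < α) (g : EC N) (x : EC N) (hx : x ∈ C)
    (xp : EC N) (hxp : xp ∈ C)
    (hmin : IsMinOn (fun xb => Sh h W α g x xb) C xp) :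
    (inner ℂ g (x - xp) : ℂ).re ≥ (1 / α) * wnorm2 W (xp - x) + h xp - h x :=
  stmt1_general h hconv W C hCcv α g x hx xp hxp hmin
end

section
/- Let s, v ∈ ℂ^N be nonzero vectors with b := Re⟨s, v⟩ > 0, and set a := ⟨s, s⟩ and c := ⟨v, v⟩ (so a, c > 0 and b² ≤ a·c by the Cauchy–Schwarz inequality). Define τ = a/b − sqrt((a/b)² − a/c). Then τ is well defined (the quantity under the square root is nonnegative) and b/(2c) < τ ≤ b/c. -/
open scoped ComplexOrder

/-! `τ` is the smaller root of `t² − 2(a/b)t + a/c`, so `τ = (a/c) / (a/b + √((a/b)² − a/c))`.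
Cauchy–Schwarz `b² ≤ ac` makes the radicand nonnegative and the square root lie in `[0, a/b)`,
so the denominator lies in `[a/b, 2a/b)`, which gives `b/(2c) < τ ≤ b/c`. -/

section InnerProduct

open RCLike

variable {𝕜 E : Type*} [RCLike 𝕜] [NormedAddCommGroup E] [InnerProductSpace 𝕜 E]

theorem sq_re_inner_le_re_inner_self_mul (x y : E) :
    re (inner 𝕜 x y) ^ 2 ≤ re (inner 𝕜 x x) * re (inner 𝕜 y y) := by
  rw [inner_self_eq_norm_sq, inner_self_eq_norm_sq, ← mul_pow, ← sq_abs]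
  exact pow_le_pow_left₀ (abs_nonneg _) ((abs_re_le_norm _).trans (norm_inner_le_norm x y)) 2

end InnerProduct

namespace Real

variable {p q : ℝ}

theorem sub_sqrt_sq_sub_eq_div (hp : 0 < p) (hqp : q ≤ p ^ 2) :
    p - √(p ^ 2 - q) = q / (p + √(p ^ 2 - q)) := by
  rw [eq_div_iff (by positivity)]
  linear_combination (-1 : ℝ) * sq_sqrt (sub_nonneg.2 hqp)

theorem div_two_mul_lt_sub_sqrt_sq_sub (hp : 0 < p) (hq : 0 < q) (hqp : q ≤ p ^ 2) :
    q / (2 * p) < p - √(p ^ 2 - q) := by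
  rw [sub_sqrt_sq_sub_eq_div hp hqp]
  have hsqrt : √(p ^ 2 - q) < p := (sqrt_lt' hp).2 (by linarith)
  exact div_lt_div_of_pos_left hq (by positivity) (by linarith)

theorem sub_sqrt_sq_sub_le_div (hp : 0 < p) (hq : 0 ≤ q) (hqp : q ≤ p ^ 2) :
    p - √(p ^ 2 - q) ≤ q / p := by
  rw [sub_sqrt_sq_sub_eq_div hp hqp]
  exact div_le_div_of_nonneg_left hq hp (le_add_of_nonneg_right (sqrt_nonneg _))

end Real

/-- Bounds on the self-scaling parameter `τ`. For nonzero
`s, v ∈ ℂ^N` with `b = Re⟨s, v⟩ > 0`, `a = ⟨s, s⟩`, `c = ⟨v, v⟩`, the quantity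
`τ = a/b − sqrt((a/b)² − a/c)` is well defined (the radicand is nonnegative)
and satisfies `b/(2c) < τ ≤ b/c`. -/
theorem stmt5 {N : ℕ} (s v : EC N) (hs : s ≠ 0) (hv : v ≠ 0)
    (a b c τ : ℝ)
    (ha : a = (inner ℂ s s : ℂ).re) (hb : b = (inner ℂ s v : ℂ).re)
    (hc : c = (inner ℂ v v : ℂ).re) (hbpos : 0 < b)
    (hτ : τ = a / b - Real.sqrt ((a / b) ^ 2 - a / c)) :
    0 ≤ (a / b) ^ 2 - a / c ∧ b / (2 * c) < τ ∧ τ ≤ b / c := by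
  have ha0 : 0 < a := by rw [ha]; exact re_inner_self_pos (𝕜 := ℂ) |>.2 hs
  have hc0 : 0 < c := by rw [hc]; exact re_inner_self_pos (𝕜 := ℂ) |>.2 hv
  have hbac : b ^ 2 ≤ a * c := by
    rw [ha, hb, hc]; exact sq_re_inner_le_re_inner_self_mul (𝕜 := ℂ) s v
  have hqp : a / c ≤ (a / b) ^ 2 := by
    rw [div_pow, div_le_div_iff₀ hc0 (by positivity)]
    nlinarith
  have hlower : a / c / (2 * (a / b)) = b / (2 * c) := by field_simp
  have hupper : a / c / (a / b) = b / c := by field_simp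
  subst hτ
  refine ⟨sub_nonneg.2 hqp, ?_, ?_⟩
  · rw [← hlower]
    exact Real.div_two_mul_lt_sub_sqrt_sq_sub (by positivity) (by positivity) hqp
  · rw [← hupper]
    exact Real.sub_sqrt_sq_sub_le_div (by positivity) (by positivity) hqp
end

section
/- Let s, v ∈ ℂ^N be nonzero vectors with b := Re⟨s, v⟩ > 0, set a := ⟨s, s⟩ and c := ⟨v, v⟩, and let τ be a real number with b/(2c) ≤ τ ≤ b/c. Set u = s − τ·v and ρ = Re⟨u, v⟩, and let δ > 0. If ρ > δ·‖u‖·‖v‖, then ⟨u, u⟩/ρ ≤ a/(δ·b). -/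
open scoped ComplexOrder

/-! Expanding `‖s - τ v‖² = ‖s‖² - 2τ Re⟨s, v⟩ + τ²‖v‖²` shows `‖u‖ ≤ ‖s‖` whenever
`0 ≤ τ ≤ 2b/c`. The hypothesis on `ρ` gives `‖u‖²/ρ ≤ ‖u‖/(δ‖v‖)`, and then
`‖u‖/(δ‖v‖) ≤ ‖s‖/(δ‖v‖) ≤ ‖s‖²/(δ b)` by Cauchy–Schwarz `b ≤ ‖s‖‖v‖`. -/

theorem norm_sub_ofReal_smul_le_norm {𝕜 E : Type*} [RCLike 𝕜] [SeminormedAddCommGroup E]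
    [InnerProductSpace 𝕜 E] {s v : E} {τ : ℝ} (hτ : 0 ≤ τ)
    (h : τ * ‖v‖ ^ 2 ≤ 2 * RCLike.re (inner 𝕜 s v)) :
    ‖s - (τ : 𝕜) • v‖ ≤ ‖s‖ := by
  rw [← sq_le_sq₀ (norm_nonneg _) (norm_nonneg _), norm_sub_sq (𝕜 := 𝕜), inner_smul_right,
    RCLike.re_ofReal_mul, norm_smul, RCLike.norm_ofReal, abs_of_nonneg hτ]
  nlinarith

theorem sq_div_le_div_of_mul_mul_lt {x y δ ρ : ℝ} (hx : 0 ≤ x) (hy : 0 < y) (hδ : 0 < δ)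
    (h : δ * x * y < ρ) : x ^ 2 / ρ ≤ x / (δ * y) := by
  have hρ : 0 < ρ := lt_of_le_of_lt (by positivity) h
  rw [div_le_div_iff₀ hρ (by positivity)]
  nlinarith

theorem stmt6_general {N : ℕ} (s v : EC N) (hv : v ≠ 0)
    (a b c : ℝ)
    (ha : a = (inner ℂ s s : ℂ).re) (hb : b = (inner ℂ s v : ℂ).re)
    (hc : c = (inner ℂ v v : ℂ).re) (hbpos : 0 < b)
    (τ : ℝ) (hτl : b / (2 * c) ≤ τ) (hτu : τ ≤ b / c)
    (u : EC N) (hu : u = s - (τ : ℂ) • v)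
    (ρ : ℝ)
    (δ : ℝ) (hδ : 0 < δ) (hcond : ρ > δ * ‖u‖ * ‖v‖) :
    (inner ℂ u u : ℂ).re / ρ ≤ a / (δ * b) := by
  have hv_pos : 0 < ‖v‖ := norm_pos_iff.mpr hv
  have hc_norm : c = ‖v‖ ^ 2 := hc.trans (inner_self_eq_norm_sq (𝕜 := ℂ) v)
  have hc_pos : 0 < c := hc_norm ▸ by positivity
  have hτ_nonneg : 0 ≤ τ := le_trans (by positivity) hτl
  have hτc : τ * c ≤ b := (le_div_iff₀ hc_pos).mp hτu
  have hus : ‖u‖ ≤ ‖s‖ := hu ▸ norm_sub_ofReal_smul_le_norm hτ_nonneg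
    (by rw [← hc_norm, RCLike.re_to_complex, ← hb]; linarith)
  have hb_le : b ≤ ‖s‖ * ‖v‖ := hb ▸ re_inner_le_norm (𝕜 := ℂ) s v
  rw [show (inner ℂ u u : ℂ).re = ‖u‖ ^ 2 from inner_self_eq_norm_sq (𝕜 := ℂ) u,
    ha.trans (inner_self_eq_norm_sq (𝕜 := ℂ) s)]
  have hub : ‖u‖ * b ≤ ‖s‖ * (‖s‖ * ‖v‖) := mul_le_mul hus hb_le hbpos.le (norm_nonneg s)
  calc ‖u‖ ^ 2 / ρ ≤ ‖u‖ / (δ * ‖v‖) :=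
        sq_div_le_div_of_mul_mul_lt (norm_nonneg u) hv_pos hδ hcond
    _ ≤ ‖s‖ ^ 2 / (δ * b) := by
      rw [div_le_div_iff₀ (by positivity) (by positivity)]
      nlinarith

/-- Bound on `⟨u,u⟩/ρ`. For nonzero `s, v ∈ ℂ^N` with
`b = Re⟨s, v⟩ > 0`, `a = ⟨s, s⟩`, `c = ⟨v, v⟩`, a real `τ` with
`b/(2c) ≤ τ ≤ b/c`, `u = s − τ·v`, `ρ = Re⟨u, v⟩` and `δ > 0`: if
`ρ > δ‖u‖‖v‖` then `⟨u, u⟩/ρ ≤ a/(δ·b)`. -/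
theorem stmt6 {N : ℕ} (s v : EC N) (hs : s ≠ 0) (hv : v ≠ 0)
    (a b c : ℝ)
    (ha : a = (inner ℂ s s : ℂ).re) (hb : b = (inner ℂ s v : ℂ).re)
    (hc : c = (inner ℂ v v : ℂ).re) (hbpos : 0 < b)
    (τ : ℝ) (hτl : b / (2 * c) ≤ τ) (hτu : τ ≤ b / c)
    (u : EC N) (hu : u = s - (τ : ℂ) • v)
    (ρ : ℝ) (hρ : ρ = (inner ℂ u v : ℂ).re)
    (δ : ℝ) (hδ : 0 < δ) (hcond : ρ > δ * ‖u‖ * ‖v‖) :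
    (inner ℂ u u : ℂ).re / ρ ≤ a / (δ * b) :=
  stmt6_general s v hv a b c ha hb hc hbpos τ hτl hτu u hu ρ δ hδ hcond
end

section
/- Let δ > 0, θ₁ ∈ (0,1), θ₂ ∈ (1,∞). Let s, v ∈ ℂ^N be nonzero with a := ⟨s,s⟩, b := Re⟨s,v⟩, c := ⟨v,v⟩, and suppose θ₁ ≤ b/a and c/b ≤ θ₂ (in particular b > 0). Define τ = a/b − sqrt((a/b)² − a/c) and ρ = Re⟨s − τv, v⟩. Define u ∈ ℂ^N by u = s − τv if ρ > δ·‖s − τv‖·‖v‖, and u = 0 otherwise. Then the matrix H = τ·I_N + u·uᴴ/ρ (interpreted as H = τ·I_N when u = 0) is Hermitian positive definite and satisfies (1/(2θ₂))·I_N ⪯ H ⪯ ((1 + δ)/(δ·θ₁))·I_N in the Loewner order. -/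
open scoped ComplexOrder

/-!
Write `p = a/b` and `q = √(p² − a/c)`, so that `τ = p − q` and `(p − q)(p + q) = a/c`.
Since `p + q ≤ 2p`, this gives `τ ≥ b/(2c) ≥ 1/(2θ₂)`, and trivially `τ ≤ p ≤ 1/θ₁`.
The eigenvalues of `τ·I + t·u·uᴴ` are `τ` and `τ + t‖u‖²`. When `u = s − τv ≠ 0`, expanding
`‖s − τv‖²` and using that `τ` is a root of `cτ² − 2pcτ + a = 0` gives `‖u‖² = 2qρ`, so the
top eigenvalue is `p + q ≤ 2/θ₁`; the test `ρ > δ‖u‖‖v‖` together with `ρ ≤ ‖u‖‖v‖` forces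
`δ < 1`, whence `2/θ₁ ≤ (1 + δ)/(δθ₁)`.
-/

open Matrix

section Scalar

variable {a b c : ℝ}

theorem sq_div_sub_div_nonneg (hb : 0 < b) (hc : 0 < c) (hbac : b ^ 2 ≤ a * c) :
    0 ≤ (a / b) ^ 2 - a / c := by
  have ha : 0 < a := by nlinarith
  rw [div_pow, sub_nonneg, div_le_div_iff₀ hc (by positivity)]
  nlinarith

theorem sqrt_sq_div_sub_div_le (ha : 0 ≤ a) (hb : 0 ≤ b) (hc : 0 ≤ c) :
    √((a / b) ^ 2 - a / c) ≤ a / b := by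
  rw [Real.sqrt_le_left (by positivity)]
  linarith [div_nonneg ha hc]

theorem div_two_mul_le_sub_sqrt (hb : 0 < b) (hc : 0 < c) (hbac : b ^ 2 ≤ a * c) :
    b / (2 * c) ≤ a / b - √((a / b) ^ 2 - a / c) := by
  have ha : 0 < a := by nlinarith
  set p := a / b
  set q := √(p ^ 2 - a / c)
  have hq : q ^ 2 = p ^ 2 - a / c := Real.sq_sqrt (sq_div_sub_div_nonneg hb hc hbac)
  have hqp : q ≤ p := sqrt_sq_div_sub_div_le ha.le hb.le hc.le
  have hpb : p * b = a := div_mul_cancel₀ a hb.ne'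
  have hpqc : (p - q) * (p + q) * c = a := by
    rw [show (p - q) * (p + q) = a / c by linear_combination -hq, div_mul_cancel₀ a hc.ne']
  have hpb_le : p * b ≤ p * (2 * c * (p - q)) := by
    nlinarith [mul_nonneg hc.le (sq_nonneg (p - q))]
  rw [div_le_iff₀ (by positivity)]
  nlinarith [le_of_mul_le_mul_left hpb_le (by positivity)]

theorem one_div_two_mul_le_sub_sqrt {θ : ℝ} (hb : 0 < b) (hc : 0 < c) (hbac : b ^ 2 ≤ a * c)
    (hcb : c / b ≤ θ) : 1 / (2 * θ) ≤ a / b - √((a / b) ^ 2 - a / c) := calc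
  1 / (2 * θ) ≤ 1 / (2 * (c / b)) := by gcongr
  _ = b / (2 * c) := by field_simp
  _ ≤ a / b - √((a / b) ^ 2 - a / c) := div_two_mul_le_sub_sqrt hb hc hbac

theorem mul_one_div_le_one_add_div_mul {k δ θ : ℝ} (hδ : 0 < δ) (hθ : 0 < θ)
    (hk : k * δ ≤ 1 + δ) : k * (1 / θ) ≤ (1 + δ) / (δ * θ) := by
  rw [mul_one_div, div_le_div_iff₀ hθ (mul_pos hδ hθ)]
  nlinarith

end Scalar

section InnerProductSpace

variable {E : Type*} [NormedAddCommGroup E] [InnerProductSpace ℂ E]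

theorem sq_re_inner_le_norm_sq_mul_norm_sq (s v : E) :
    (inner ℂ s v).re ^ 2 ≤ ‖s‖ ^ 2 * ‖v‖ ^ 2 := by
  rw [← mul_pow]
  have h := abs_le.mp ((Complex.abs_re_le_norm _).trans (norm_inner_le_norm (𝕜 := ℂ) s v))
  exact sq_le_sq' h.1 h.2

theorem lt_one_of_mul_norm_mul_norm_lt_re_inner {δ : ℝ} {w v : E}
    (h : δ * ‖w‖ * ‖v‖ < (inner ℂ w v).re) : δ < 1 := by
  have := (Complex.re_le_norm _).trans (norm_inner_le_norm (𝕜 := ℂ) w v)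
  nlinarith [mul_nonneg (norm_nonneg w) (norm_nonneg v)]

theorem norm_sub_ofReal_smul_sq (s v : E) (τ : ℝ) :
    ‖s - (τ : ℂ) • v‖ ^ 2 = ‖s‖ ^ 2 - 2 * τ * (inner ℂ s v).re + τ ^ 2 * ‖v‖ ^ 2 := by
  rw [norm_sub_sq (𝕜 := ℂ), inner_smul_right, norm_smul, Complex.norm_real, Real.norm_eq_abs,
    mul_pow, sq_abs, RCLike.re_to_complex, Complex.re_ofReal_mul]
  ring

theorem re_inner_sub_ofReal_smul (s v : E) (τ : ℝ) :
    (inner ℂ (s - (τ : ℂ) • v) v).re = (inner ℂ s v).re - τ * ‖v‖ ^ 2 := by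
  rw [inner_sub_left, inner_smul_left]
  simp [← inner_self_eq_norm_sq (𝕜 := ℂ)]

theorem norm_sub_ofReal_smul_sq_eq_two_mul_re_inner {s v : E} {a b c q τ : ℝ}
    (ha : ‖s‖ ^ 2 = a) (hb : (inner ℂ s v).re = b) (hc : ‖v‖ ^ 2 = c) (hb₀ : b ≠ 0)
    (hc₀ : c ≠ 0) (hq : q ^ 2 = (a / b) ^ 2 - a / c) (hτ : τ = a / b - q) :
    ‖s - (τ : ℂ) • v‖ ^ 2 = 2 * q * (inner ℂ (s - (τ : ℂ) • v) v).re := by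
  rw [norm_sub_ofReal_smul_sq, re_inner_sub_ofReal_smul, ha, hb, hc, hτ]
  field_simp
  field_simp at hq
  linear_combination -hq

theorem mul_norm_sq_add_mul_norm_inner_sq_nonneg {r t : ℝ} (u x : E) (hr : 0 ≤ r)
    (hrt : 0 ≤ r + t * ‖u‖ ^ 2) : 0 ≤ r * ‖x‖ ^ 2 + t * ‖inner ℂ u x‖ ^ 2 := by
  rcases le_or_gt 0 t with ht | ht
  · positivity
  · have hCS : ‖inner ℂ u x‖ ^ 2 ≤ ‖u‖ ^ 2 * ‖x‖ ^ 2 := by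
      rw [← mul_pow]
      exact pow_le_pow_left₀ (norm_nonneg _) (norm_inner_le_norm u x) 2
    nlinarith [mul_nonneg hrt (sq_nonneg ‖x‖)]

end InnerProductSpace

section RankOne

variable {N : ℕ}

theorem dotProduct_mulVec_smul_one_add_smul_rankOne (r t : ℝ) (u x : EC N) :
    star (WithLp.ofLp x) ⬝ᵥ ((r • 1 + t • rankOne u) *ᵥ WithLp.ofLp x) =
      ((r * ‖x‖ ^ 2 + t * ‖inner ℂ u x‖ ^ 2 : ℝ) : ℂ) := by
  have hx : star (WithLp.ofLp x) ⬝ᵥ WithLp.ofLp x = ‖x‖ ^ 2 := by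
    have := inner_self_eq_norm_sq_to_K (𝕜 := ℂ) x
    rwa [EuclideanSpace.inner_eq_star_dotProduct, dotProduct_comm] at this
  have hu : star (WithLp.ofLp u) ⬝ᵥ WithLp.ofLp x = inner ℂ u x := by
    rw [EuclideanSpace.inner_eq_star_dotProduct, dotProduct_comm]
  have hux : star (WithLp.ofLp x) ⬝ᵥ WithLp.ofLp u * (star (WithLp.ofLp u) ⬝ᵥ WithLp.ofLp x) =
      ‖inner ℂ u x‖ ^ 2 := by
    rw [star_dotProduct (WithLp.ofLp x), hu, mul_comm]
    exact Complex.mul_conj' _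
  simp only [rankOne, add_mulVec, smul_mulVec, one_mulVec, vecMulVec_mulVec, dotProduct_add,
    dotProduct_smul, op_smul_eq_mul, Complex.real_smul]
  push_cast
  rw [← hx, ← hux]
  rfl

theorem isHermitian_smul_one_add_smul_rankOne (r t : ℝ) (u : EC N) :
    (r • 1 + t • rankOne u).IsHermitian :=
  (isHermitian_one.smul (.all r)).add
    ((posSemidef_vecMulVec_self_star (WithLp.ofLp u)).isHermitian.smul (.all t))

theorem posSemidef_smul_one_add_smul_rankOne {r t : ℝ} (u : EC N) (hr : 0 ≤ r)
    (hrt : 0 ≤ r + t * ‖u‖ ^ 2) : (r • 1 + t • rankOne u).PosSemidef := by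
  refine posSemidef_iff_dotProduct_mulVec.2 ⟨isHermitian_smul_one_add_smul_rankOne r t u, ?_⟩
  intro x
  rw [← WithLp.ofLp_toLp 2 x, dotProduct_mulVec_smul_one_add_smul_rankOne]
  exact Complex.zero_le_real.2 (mul_norm_sq_add_mul_norm_inner_sq_nonneg u _ hr hrt)

theorem smul_one_add_smul_rankOne_loewner_bounds {lo hi r t : ℝ} (u : EC N) (hlo₀ : 0 < lo)
    (hlo : lo ≤ r) (ht : 0 ≤ t * ‖u‖ ^ 2) (hhi : r + t * ‖u‖ ^ 2 ≤ hi) :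
    (r • 1 + t • rankOne u).PosDef ∧ (r • 1 + t • rankOne u - lo • 1).PosSemidef ∧
      (hi • 1 - (r • 1 + t • rankOne u)).PosSemidef := by
  have hlower : (r • 1 + t • rankOne u - lo • 1).PosSemidef := by
    rw [show r • 1 + t • rankOne u - lo • 1 = (r - lo) • 1 + t • rankOne u by
      rw [sub_smul]; abel]
    exact posSemidef_smul_one_add_smul_rankOne u (by linarith) (by linarith)
  refine ⟨?_, hlower, ?_⟩
  · rw [← add_sub_cancel (lo • (1 : Matrix (Fin N) (Fin N) ℂ)) (r • 1 + t • rankOne u)]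
    exact (PosDef.one.smul hlo₀).add_posSemidef hlower
  · rw [show hi • 1 - (r • 1 + t • rankOne u) = (hi - r) • 1 + (-t) • rankOne u by
      rw [sub_smul, neg_smul]; abel]
    exact posSemidef_smul_one_add_smul_rankOne u (by linarith) (by linarith)

end RankOne

theorem stmt7_general {N : ℕ} (δ θ₁ θ₂ : ℝ) (hδ : 0 < δ)
    (hθ₁ : θ₁ ∈ Set.Ioo (0 : ℝ) 1)
    (s v : EC N)
    (a b c : ℝ)
    (ha : a = (inner ℂ s s : ℂ).re) (hb : b = (inner ℂ s v : ℂ).re)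
    (hc : c = (inner ℂ v v : ℂ).re) (hbpos : 0 < b)
    (hab : θ₁ ≤ b / a) (hcb : c / b ≤ θ₂)
    (τ : ℝ) (hτ : τ = a / b - Real.sqrt ((a / b) ^ 2 - a / c))
    (ρ : ℝ) (hρ : ρ = (inner ℂ (s - (τ : ℂ) • v) v : ℂ).re)
    (u : EC N)
    (hu : u = if ρ > δ * ‖s - (τ : ℂ) • v‖ * ‖v‖ then s - (τ : ℂ) • v else 0)
    (H : Matrix (Fin N) (Fin N) ℂ)
    (hH : H = τ • (1 : Matrix (Fin N) (Fin N) ℂ) + ρ⁻¹ • rankOne u) :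
    H.PosDef ∧
      (H - (1 / (2 * θ₂)) • (1 : Matrix (Fin N) (Fin N) ℂ)).PosSemidef ∧
      (((1 + δ) / (δ * θ₁)) • (1 : Matrix (Fin N) (Fin N) ℂ) - H).PosSemidef := by
  have hsa : ‖s‖ ^ 2 = a := (ha.trans (inner_self_eq_norm_sq (𝕜 := ℂ) s)).symm
  have hvc : ‖v‖ ^ 2 = c := (hc.trans (inner_self_eq_norm_sq (𝕜 := ℂ) v)).symm
  have hbac : b ^ 2 ≤ a * c := hsa ▸ hvc ▸ hb ▸ sq_re_inner_le_norm_sq_mul_norm_sq s v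
  have ha₀ : 0 ≤ a := hsa ▸ sq_nonneg ‖s‖
  have hc₀ : 0 < c := pos_of_mul_pos_right ((pow_pos hbpos 2).trans_le hbac) ha₀
  set q := √((a / b) ^ 2 - a / c)
  have hqp : q ≤ a / b := sqrt_sq_div_sub_div_le ha₀ hbpos.le hc₀.le
  have hτlo : 1 / (2 * θ₂) ≤ τ := hτ ▸ one_div_two_mul_le_sub_sqrt hbpos hc₀ hbac hcb
  have hpθ : a / b ≤ 1 / θ₁ := by
    simpa only [one_div_div] using one_div_le_one_div_of_le hθ₁.1 hab
  obtain ⟨hκ₀, hκ⟩ : 0 ≤ ρ⁻¹ * ‖u‖ ^ 2 ∧ τ + ρ⁻¹ * ‖u‖ ^ 2 ≤ (1 + δ) / (δ * θ₁) := by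
    split_ifs at hu with hρδ <;> subst hu
    · have hρ₀ : 0 < ρ := lt_of_le_of_lt (by positivity) hρδ
      have hδ₁ : δ < 1 := lt_one_of_mul_norm_mul_norm_lt_re_inner (hρ ▸ hρδ)
      rw [norm_sub_ofReal_smul_sq_eq_two_mul_re_inner hsa hb.symm hvc hbpos.ne' hc₀.ne'
        (Real.sq_sqrt (sq_div_sub_div_nonneg hbpos hc₀ hbac)) hτ, ← hρ,
        mul_comm ρ⁻¹, mul_inv_cancel_right₀ hρ₀.ne']
      refine ⟨by positivity, ?_⟩
      calc τ + 2 * q ≤ 2 * (1 / θ₁) := by linarith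
        _ ≤ (1 + δ) / (δ * θ₁) := mul_one_div_le_one_add_div_mul hδ hθ₁.1 (by linarith)
    · rw [norm_zero, zero_pow two_ne_zero, mul_zero, add_zero]
      have hq₀ : 0 ≤ q := Real.sqrt_nonneg _
      exact ⟨le_rfl, (by linarith : τ ≤ 1 * (1 / θ₁)).trans
        (mul_one_div_le_one_add_div_mul hδ hθ₁.1 (by linarith))⟩
  subst hH
  have hθ₂ : 0 < θ₂ := (div_pos hc₀ hbpos).trans_le hcb
  exact smul_one_add_smul_rankOne_loewner_bounds u (by positivity) hτlo hκ₀ hκ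

/-- The estimated inverse Hessian is Hermitian positive
definite and uniformly bounded. With `δ > 0`, `θ₁ ∈ (0,1)`, `θ₂ ∈ (1,∞)`,
nonzero `s, v ∈ ℂ^N`, `a = ⟨s,s⟩`, `b = Re⟨s,v⟩ > 0`, `c = ⟨v,v⟩`,
`θ₁ ≤ b/a`, `c/b ≤ θ₂`, `τ = a/b − sqrt((a/b)² − a/c)`, `ρ = Re⟨s − τv, v⟩`,
`u = s − τv` if `ρ > δ‖s − τv‖‖v‖` and `u = 0` otherwise, the matrix
`H = τ·I + u·uᴴ/ρ` is Hermitian positive definite and satisfies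
`(1/(2θ₂))·I ⪯ H ⪯ ((1+δ)/(δθ₁))·I` in the Loewner order. -/
theorem stmt7 {N : ℕ} (δ θ₁ θ₂ : ℝ) (hδ : 0 < δ)
    (hθ₁ : θ₁ ∈ Set.Ioo (0 : ℝ) 1) (hθ₂ : 1 < θ₂)
    (s v : EC N) (hs : s ≠ 0) (hv : v ≠ 0)
    (a b c : ℝ)
    (ha : a = (inner ℂ s s : ℂ).re) (hb : b = (inner ℂ s v : ℂ).re)
    (hc : c = (inner ℂ v v : ℂ).re) (hbpos : 0 < b)
    (hab : θ₁ ≤ b / a) (hcb : c / b ≤ θ₂)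
    (τ : ℝ) (hτ : τ = a / b - Real.sqrt ((a / b) ^ 2 - a / c))
    (ρ : ℝ) (hρ : ρ = (inner ℂ (s - (τ : ℂ) • v) v : ℂ).re)
    (u : EC N)
    (hu : u = if ρ > δ * ‖s - (τ : ℂ) • v‖ * ‖v‖ then s - (τ : ℂ) • v else 0)
    (H : Matrix (Fin N) (Fin N) ℂ)
    (hH : H = τ • (1 : Matrix (Fin N) (Fin N) ℂ) + ρ⁻¹ • rankOne u) :
    H.PosDef ∧
      (H - (1 / (2 * θ₂)) • (1 : Matrix (Fin N) (Fin N) ℂ)).PosSemidef ∧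
      (((1 + δ) / (δ * θ₁)) • (1 : Matrix (Fin N) (Fin N) ℂ) - H).PosSemidef :=
  stmt7_general δ θ₁ θ₂ hδ hθ₁ s v a b c ha hb hc hbpos hab hcb τ hτ ρ hρ u hu H hH
end

section
/- Let f : ℂ^N → ℝ be differentiable (over ℝ) with L-Lipschitz gradient ∇f for some L > 0, let h : ℂ^N → ℝ be convex and differentiable, and set F = h + f. Let C ⊆ ℂ^N be a nonempty closed convex set, let B ∈ ℂ^{N×N} be Hermitian with η·I_N ⪯ B for some η > 0, and let 0 < α ≤ η/L. Fix x ∈ C and let x⁺ ∈ C be a minimizer over C of x̄ ↦ S_h(x̄, x, ∇f(x), B, α). Then F(x⁺) ≤ F(x) − (α/2)·D_h^C(x, ∇f(x), B, α). -/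
/-! The smooth part obeys the descent lemma `f y ≤ f x + Re⟨∇f x, y - x⟩ + (L/2)‖y - x‖²`,
and `η·I ⪯ B` with `αL ≤ η` gives `(L/2)‖z‖² ≤ (1/(2α))‖z‖_B²`. Hence the surrogate
`S_h(·, x, ∇f x, B, α)` majorizes `F - F x`, and at its minimizer over `C` it equals
`-(α/2)·D_h^C(x, ∇f x, B, α)`. -/

open scoped ComplexOrder

theorem le_add_apply_add_sq_of_lipschitz_fderiv {E : Type*} [NormedAddCommGroup E]
    [NormedSpace ℝ E] {f : E → ℝ} {f' : E → E →L[ℝ] ℝ} {L : ℝ}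
    (hf : ∀ x, HasFDerivAt f (f' x) x) (hlip : ∀ x y, ‖f' y - f' x‖ ≤ L * ‖y - x‖)
    (x y : E) : f y ≤ f x + f' x (y - x) + L / 2 * ‖y - x‖ ^ 2 := by
  set v := y - x
  -- `φ` is antitone on `[0, ∞)`; comparing `φ 1` with `φ 0` is the claim.
  let φ : ℝ → ℝ := fun t => f (x + t • v) - t * f' x v - L / 2 * t ^ 2 * ‖v‖ ^ 2
  let φ' : ℝ → ℝ := fun t => f' (x + t • v) v - f' x v - L * t * ‖v‖ ^ 2
  have hφ : ∀ t, HasDerivAt φ (φ' t) t := by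
    intro t
    have hline : HasDerivAt (fun s : ℝ => x + s • v) v t := by
      simpa using ((hasDerivAt_id t).smul_const v).const_add x
    have := (((hf _).comp_hasDerivAt t hline).sub
      ((hasDerivAt_id t).mul_const (f' x v))).sub
      (((hasDerivAt_pow 2 t).const_mul (L / 2)).mul_const (‖v‖ ^ 2))
    refine this.congr_deriv ?_
    simp only [φ']
    ring
  have hφ'_nonpos : ∀ t, 0 ≤ t → φ' t ≤ 0 := by
    intro t ht
    have hgrowth : (f' (x + t • v) - f' x) v ≤ L * t * ‖v‖ ^ 2 :=
      calc (f' (x + t • v) - f' x) v ≤ ‖f' (x + t • v) - f' x‖ * ‖v‖ :=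
            (le_abs_self _).trans ((f' (x + t • v) - f' x).le_opNorm v)
        _ ≤ L * ‖x + t • v - x‖ * ‖v‖ := by gcongr; exact hlip _ _
        _ = L * t * ‖v‖ ^ 2 := by
            rw [add_sub_cancel_left, norm_smul, Real.norm_of_nonneg ht]; ring
    simp only [φ', sub_apply] at hgrowth ⊢
    linarith
  have hanti : AntitoneOn φ (Set.Ici 0) :=
    antitoneOn_of_hasDerivWithinAt_nonpos (convex_Ici 0)
      (fun t _ => (hφ t).continuousAt.continuousWithinAt)
      (fun t _ => (hφ t).hasDerivWithinAt)
      (fun t ht => hφ'_nonpos t (interior_subset ht))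
  have h10 : φ 1 ≤ φ 0 := hanti Set.self_mem_Ici (Set.mem_Ici.2 zero_le_one) zero_le_one
  simp only [φ, v, one_smul, zero_smul, add_zero, add_sub_cancel] at h10
  linarith

theorem gradDual_apply {N : ℕ} (g d : EC N) : gradDual g d = (inner ℂ g d : ℂ).re := rfl

theorem norm_gradDual_sub_le {N : ℕ} (g₁ g₂ : EC N) :
    ‖gradDual g₁ - gradDual g₂‖ ≤ ‖g₁ - g₂‖ :=
  ContinuousLinearMap.opNorm_le_bound _ (norm_nonneg _) fun d => by
    rw [sub_apply, gradDual_apply, gradDual_apply, ← Complex.sub_re,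
      ← inner_sub_left]
    exact (Complex.abs_re_le_norm _).trans (norm_inner_le_norm _ _)

theorem le_add_inner_add_sq_of_lipschitz_grad {N : ℕ} {f : EC N → ℝ} {gradf : EC N → EC N}
    {L : ℝ} (hf : ∀ x, HasFDerivAt f (gradDual (gradf x)) x)
    (hlip : ∀ x₁ x₂ : EC N, ‖gradf x₁ - gradf x₂‖ ≤ L * ‖x₁ - x₂‖) (x y : EC N) :
    f y ≤ f x + (inner ℂ (gradf x) (y - x) : ℂ).re + L / 2 * ‖y - x‖ ^ 2 :=
  le_add_apply_add_sq_of_lipschitz_fderiv hf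
    (fun x y => (norm_gradDual_sub_le _ _).trans (hlip y x)) x y

theorem mul_norm_sq_le_wnorm2 {N : ℕ} {W : Matrix (Fin N) (Fin N) ℂ} {c : ℝ}
    (hW : (W - c • (1 : Matrix (Fin N) (Fin N) ℂ)).PosSemidef) (z : EC N) :
    c * ‖z‖ ^ 2 ≤ wnorm2 W z := by
  have hnorm : ((star fun i => z i) ⬝ᵥ fun i => z i).re = ‖z‖ ^ 2 := by
    rw [dotProduct_comm]
    exact inner_self_eq_norm_sq (𝕜 := ℂ) z
  have h0 := (Complex.le_def.mp (hW.dotProduct_mulVec_nonneg (fun i => z i))).1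
  rw [Matrix.sub_mulVec, Matrix.smul_mulVec, Matrix.one_mulVec, dotProduct_sub,
    dotProduct_smul, Complex.sub_re, Complex.smul_re, hnorm] at h0
  simp only [Complex.zero_re, smul_eq_mul] at h0
  exact sub_nonneg.1 h0

theorem le_add_Sh_of_lipschitz_grad {N : ℕ} {f : EC N → ℝ} {gradf : EC N → EC N} {L : ℝ}
    (hf : ∀ x, HasFDerivAt f (gradDual (gradf x)) x)
    (hlip : ∀ x₁ x₂ : EC N, ‖gradf x₁ - gradf x₂‖ ≤ L * ‖x₁ - x₂‖)
    (h : EC N → ℝ) {B : Matrix (Fin N) (Fin N) ℂ} {η α : ℝ}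
    (hB : (B - η • (1 : Matrix (Fin N) (Fin N) ℂ)).PosSemidef) (hα : 0 < α) (hαL : α * L ≤ η)
    (x xb : EC N) : h xb + f xb ≤ h x + f x + Sh h B α (gradf x) x xb := by
  have hdesc := le_add_inner_add_sq_of_lipschitz_grad hf hlip x xb
  have hB' := mul_norm_sq_le_wnorm2 hB (xb - x)
  have hquad : L / 2 * ‖xb - x‖ ^ 2 ≤ 1 / (2 * α) * wnorm2 B (xb - x) := by
    rw [div_mul_eq_mul_div, one_div_mul_eq_div, div_le_div_iff₀ two_pos (by positivity)]
    nlinarith [sq_nonneg ‖xb - x‖]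
  unfold Sh
  linarith

theorem Dh_eq_of_isMinOn {N : ℕ} {h : EC N → ℝ} {C : Set (EC N)}
    {W : Matrix (Fin N) (Fin N) ℂ} {α : ℝ} {g x xp : EC N} (hxp : xp ∈ C)
    (hmin : IsMinOn (fun xb => Sh h W α g x xb) C xp) :
    Dh h C W α g x = -(2 / α) * Sh h W α g x xp := by
  have hleast : IsLeast ((fun xb => Sh h W α g x xb) '' C) (Sh h W α g x xp) :=
    ⟨⟨xp, hxp, rfl⟩, Set.forall_mem_image.2 fun _ hc => hmin hc⟩
  rw [Dh, hleast.csInf_eq]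

theorem stmt11_general {N : ℕ} (f : EC N → ℝ) (gradf : EC N → EC N) (L : ℝ) (hL : 0 < L)
    (hfdiff : ∀ x : EC N, HasFDerivAt f (gradDual (gradf x)) x)
    (hlip : ∀ x₁ x₂ : EC N, ‖gradf x₁ - gradf x₂‖ ≤ L * ‖x₁ - x₂‖)
    (h : EC N → ℝ)
    (F : EC N → ℝ) (hF : F = fun z => h z + f z)
    (C : Set (EC N))
    (B : Matrix (Fin N) (Fin N) ℂ)
    (η : ℝ)
    (hBlb : (B - η • (1 : Matrix (Fin N) (Fin N) ℂ)).PosSemidef)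
    (α : ℝ) (hα : 0 < α) (hαle : α ≤ η / L)
    (x : EC N) (xp : EC N) (hxp : xp ∈ C)
    (hmin : IsMinOn (fun xb => Sh h B α (gradf x) x xb) C xp) :
    F xp ≤ F x - (α / 2) * Dh h C B α (gradf x) x := by
  have hαL : α * L ≤ η := (le_div_iff₀ hL).1 hαle
  have hdec := le_add_Sh_of_lipschitz_grad hfdiff hlip h hBlb hα hαL x xp
  rw [hF, Dh_eq_of_isMinOn hxp hmin]
  have hα2 : α / 2 * (2 / α) = 1 := by field_simp
  calc h xp + f xp ≤ h x + f x + Sh h B α (gradf x) x xp := hdec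
    _ = h x + f x - α / 2 * (-(2 / α) * Sh h B α (gradf x) x xp) := by
      rw [← mul_assoc, mul_neg, hα2]; ring

/-- Sufficient decrease of the cost. Let `f` be
real-differentiable with `L`-Lipschitz gradient (`L > 0`), `h` convex
differentiable, `F = h + f`, `C` nonempty closed convex, `B` Hermitian with
`η·I ⪯ B` for some `η > 0`, `0 < α ≤ η/L`, `x ∈ C`, and let `x⁺ ∈ C` minimize
`x̄ ↦ S_h(x̄, x, ∇f(x), B, α)` over `C`. Then
`F(x⁺) ≤ F(x) − (α/2)·D_h^C(x, ∇f(x), B, α)`. -/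
theorem stmt11 {N : ℕ} (f : EC N → ℝ) (gradf : EC N → EC N) (L : ℝ) (hL : 0 < L)
    (hfdiff : ∀ x : EC N, HasFDerivAt f (gradDual (gradf x)) x)
    (hlip : ∀ x₁ x₂ : EC N, ‖gradf x₁ - gradf x₂‖ ≤ L * ‖x₁ - x₂‖)
    (h : EC N → ℝ) (hconv : ConvexOn ℝ Set.univ h) (hdiff : Differentiable ℝ h)
    (F : EC N → ℝ) (hF : F = fun z => h z + f z)
    (C : Set (EC N)) (hCne : C.Nonempty) (hCcl : IsClosed C) (hCcv : Convex ℝ C)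
    (B : Matrix (Fin N) (Fin N) ℂ) (hBH : B.IsHermitian)
    (η : ℝ) (hη : 0 < η)
    (hBlb : (B - η • (1 : Matrix (Fin N) (Fin N) ℂ)).PosSemidef)
    (α : ℝ) (hα : 0 < α) (hαle : α ≤ η / L)
    (x : EC N) (hx : x ∈ C) (xp : EC N) (hxp : xp ∈ C)
    (hmin : IsMinOn (fun xb => Sh h B α (gradf x) x xb) C xp) :
    F xp ≤ F x - (α / 2) * Dh h C B α (gradf x) x :=
  stmt11_general f gradf L hL hfdiff hlip h F hF C B η hBlb α hα hαle x xp hxp hmin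
end
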